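/- Let (Y, Σ) be a measurable space, Δ(Y) the set of countably additive probability measures on (Y, Σ), and ≽ a preorder on Δ(Y) satisfying rational independence. Define a relation ≽* on the set of finite signed measures on (Y, Σ) by: ν ≽* ν' if and only if there exist a positive rational α and p, q ∈ Δ(Y) with p ≽ q and ν − ν' = α(p − q). Then ≽* is transitive. -/

import Mathlib

open MeasureTheory

/-- The strict part of a binary relation: `p ≻ q` iff `p ≽ q` and not `q ≽ p`. -/
def StrictRel {X : Type*} (R : X → X → Prop) (x y : X) : Prop := R x y ∧ ¬ R y x

/-- The mixture `a • p + (1 - a) • r` of two measures. -/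
noncomputable def mix {Y : Type*} [MeasurableSpace Y] (a : NNReal) (p r : Measure Y) :
    Measure Y := a • p + (1 - a) • r

/-- A relation on `Δ(Y)` (here: a relation on measures, considered on probability
measures) satisfies rational independence if for all probability measures `p, q, r` and
every rational `α ∈ (0, 1]`, `p ≽ q ↔ α p + (1-α) r ≽ α q + (1-α) r`. -/
def RatIndep {Y : Type*} [MeasurableSpace Y] (R : Measure Y → Measure Y → Prop) : Prop :=
  ∀ p q r : Measure Y, IsProbabilityMeasure p → IsProbabilityMeasure q →
    IsProbabilityMeasure r → ∀ a : ℚ, 0 < a → a ≤ 1 →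
      (R p q ↔ R (mix (Real.toNNReal (a : ℝ)) p r) (mix (Real.toNNReal (a : ℝ)) q r))

/-- The relation `≽*` on finite signed measures: `ν ≽* ν'` iff there are a positive
rational `α` and probability measures `p ≽ q` with `ν − ν' = α(p − q)`. -/
def SignedExt {Y : Type*} [MeasurableSpace Y] (R : Measure Y → Measure Y → Prop)
    (ν ν' : SignedMeasure Y) : Prop :=
  ∃ a : ℚ, 0 < a ∧ ∃ (p q : Measure Y) (hp : IsProbabilityMeasure p)
    (hq : IsProbabilityMeasure q), R p q ∧
      ν - ν' = (a : ℝ) •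
        (letI := hp; letI := hq; (p.toSignedMeasure - q.toSignedMeasure))

lemma mix_isProb {Y : Type*} [MeasurableSpace Y] {t : NNReal} (ht : t ≤ 1)
    {p r : Measure Y} (hp : IsProbabilityMeasure p) (hr : IsProbabilityMeasure r) :
    IsProbabilityMeasure (mix t p r) := by
  constructor
  simp only [mix, Measure.coe_add, Pi.add_apply, Measure.smul_apply, measure_univ,
    smul_eq_mul, mul_one]
  rw [ENNReal.smul_def, ENNReal.smul_def, smul_eq_mul, smul_eq_mul, mul_one, mul_one,
    ← ENNReal.coe_add, add_tsub_cancel_of_le ht, ENNReal.coe_one]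

instance mix_isFinite {Y : Type*} [MeasurableSpace Y] (t : NNReal)
    (p r : Measure Y) [IsFiniteMeasure p] [IsFiniteMeasure r] :
    IsFiniteMeasure (mix t p r) := by
  unfold mix; infer_instance

lemma mix_toSigned {Y : Type*} [MeasurableSpace Y] {t : NNReal}
    {p r : Measure Y} [IsFiniteMeasure p] [IsFiniteMeasure r] :
    (mix t p r).toSignedMeasure
      = (t : ℝ) • p.toSignedMeasure + ((1 - t : NNReal) : ℝ) • r.toSignedMeasure := by
  unfold mix
  rw [Measure.toSignedMeasure_add, Measure.toSignedMeasure_smul,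
    Measure.toSignedMeasure_smul, NNReal.smul_def, NNReal.smul_def]

/-- If `≽` is a preorder on `Δ(Y)` satisfying rational independence, then `≽*` is
transitive. -/
theorem signedExt_transitive {Y : Type*} [MeasurableSpace Y]
    (R : Measure Y → Measure Y → Prop)
    (hrefl : ∀ p : Measure Y, IsProbabilityMeasure p → R p p)
    (htrans : ∀ p q r : Measure Y, IsProbabilityMeasure p → IsProbabilityMeasure q →
      IsProbabilityMeasure r → R p q → R q r → R p r)
    (hRI : RatIndep R) :
    Transitive (SignedExt R) := by
  rintro ν ν' ν'' ⟨a, ha, p, q, hp, hq, hpq, hab⟩ ⟨b, hb, p', q', hp', hq', hpq', hbc⟩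
  have hc : (0:ℚ) < a + b := by positivity
  set l : ℚ := a / (a + b) with hl
  have hl0 : 0 < l := by positivity
  have hl1 : l < 1 := by rw [hl, div_lt_one hc]; linarith
  have hlr0 : (0:ℝ) ≤ (l:ℝ) := by exact_mod_cast hl0.le
  have hlr1 : (l:ℝ) ≤ 1 := by exact_mod_cast hl1.le
  set t : NNReal := Real.toNNReal (l:ℝ) with htdef
  have hct : (t : ℝ) = (l : ℝ) := Real.coe_toNNReal _ hlr0
  have ht1 : t ≤ 1 := Real.toNNReal_le_one.mpr hlr1
  have hct' : ((1 - t : NNReal) : ℝ) = 1 - (l : ℝ) := by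
    rw [NNReal.coe_sub ht1, hct, NNReal.coe_one]
  have hs : Real.toNNReal ((1 - l : ℚ):ℝ) = 1 - t := by
    apply NNReal.eq
    rw [hct', Real.coe_toNNReal]
    · push_cast; ring
    · push_cast; linarith
  have hs' : 1 - (1 - t) = t := tsub_tsub_cancel_of_le ht1
  have hP : IsProbabilityMeasure (mix t p p') := mix_isProb ht1 hp hp'
  have hQ : IsProbabilityMeasure (mix t q q') := mix_isProb ht1 hq hq'
  have hM : IsProbabilityMeasure (mix t q p') := mix_isProb ht1 hq hp'
  have h1 : R (mix t p p') (mix t q p') := (hRI p q p' hp hq hp' l hl0 hl1.le).mp hpq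
  have h2 : R (mix (1 - t) p' q) (mix (1 - t) q' q) := by
    rw [← hs]
    exact (hRI p' q' q hp' hq' hq (1 - l) (by linarith) (by linarith)).mp hpq'
  have e1 : mix (1 - t) p' q = mix t q p' := by
    rw [mix, mix, hs', add_comm]
  have e2 : mix (1 - t) q' q = mix t q q' := by
    rw [mix, mix, hs', add_comm]
  rw [e1, e2] at h2
  have hR : R (mix t p p') (mix t q q') := htrans _ _ _ hP hM hQ h1 h2
  refine ⟨a + b, hc, mix t p p', mix t q q', hP, hQ, hR, ?_⟩
  have key : ν - ν'' = (ν - ν') + (ν' - ν'') := by abel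
  rw [key, hab, hbc, mix_toSigned, mix_toSigned, hct, hct']
  have hab' : ((a:ℝ) + b) ≠ 0 := by positivity
  have h1 : ((a + b : ℚ) : ℝ) * (l : ℝ) = (a : ℝ) := by
    push_cast [hl]; field_simp
  have h2 : ((a + b : ℚ) : ℝ) * (1 - (l : ℝ)) = (b : ℝ) := by
    push_cast [hl]; field_simp; ring
  simp only [smul_sub, smul_add, smul_smul, h1, h2]
  abel
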